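/- Let $d_n = (2! \cdot 3! \cdots n!)^4 \cdot (n+1)!$. For any positive integers $n_1, n_2, \ldots, n_k$, the number $k! \cdot d_{n_1} \cdot d_{n_2} \cdots d_{n_k}$ divides $d_{n_1 + n_2 + \cdots + n_k}$. -/

import Mathlib

/-- `d n = (2! ⋯ n!)^4 * (n+1)!` -/
def d (n : ℕ) : ℕ := (∏ k ∈ Finset.Icc 2 n, Nat.factorial k) ^ 4 * Nat.factorial (n + 1)

/-! The induction `d (p + q + 1) = d (p + q) * ((p + q + 1)! ^ 4 * (p + q + 2))` reduces the
divisibility `(p + q)! * d p * d q ∣ d (p + q)` to a comparison of the factors gained at each step,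
which is where `(q + 1)! ∣ (p + q)!` enters. The list version follows by peeling off one entry at a
time, using `k ≤ n₁ + ⋯ + nₖ` to see `k! ∣ (n₁ + ⋯ + nₖ)!`. -/

open Nat

theorem d_succ (n : ℕ) : d (n + 1) = d n * ((n + 1)! ^ 4 * (n + 2)) := by
  cases n with
  | zero => rfl
  | succ n =>
    unfold d
    rw [Finset.prod_Icc_succ_top (by omega), factorial_succ (n + 2)]
    ring

theorem succ_mul_factorial_pow_dvd {p q : ℕ} (hp : 1 ≤ p) :
    (p + q + 1) * ((q + 1)! ^ 4 * (q + 2)) ∣ (p + q + 1)! ^ 4 * (p + q + 2) := by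
  have h₁ : (p + q + 1) * (q + 1)! ∣ (p + q + 1)! :=
    factorial_succ (p + q) ▸ mul_dvd_mul_left _ (factorial_dvd_factorial (by omega))
  have h₂ : (q + 1)! ∣ (p + q + 1)! := factorial_dvd_factorial (by omega)
  have h₃ : (q + 2)! ∣ (p + q + 1)! := factorial_dvd_factorial (by omega)
  calc (p + q + 1) * ((q + 1)! ^ 4 * (q + 2))
      = ((p + q + 1) * (q + 1)!) * (q + 1)! ^ 2 * (q + 2)! := by
        rw [factorial_succ (q + 1)]; ring
    _ ∣ (p + q + 1)! * (p + q + 1)! ^ 2 * (p + q + 1)! := by gcongr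
    _ ∣ (p + q + 1)! ^ 4 * (p + q + 2) := Dvd.intro (p + q + 2) (by ring)

theorem factorial_add_mul_d_mul_d_dvd {p q : ℕ} (hp : 1 ≤ p) (hq : 1 ≤ q) :
    (p + q)! * (d p * d q) ∣ d (p + q) := by
  induction q, hq using Nat.le_induction with
  | base =>
    have two_dvd : 2 ∣ (p + 1)! := dvd_factorial two_pos (by omega)
    rw [d_succ p, show d 1 = 2 from rfl]
    calc (p + 1)! * (d p * 2) = d p * ((p + 1)! * 2) := by ring
      _ ∣ d p * ((p + 1)! * (p + 1)! ^ 3 * (p + 2)) :=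
        mul_dvd_mul_left _ <| (mul_dvd_mul_left _ (dvd_pow two_dvd three_ne_zero)).mul_right _
      _ = d p * ((p + 1)! ^ 4 * (p + 2)) := by ring
  | succ q _ ih =>
    rw [← add_assoc, d_succ, d_succ, factorial_succ]
    calc (p + q + 1) * (p + q)! * (d p * (d q * ((q + 1)! ^ 4 * (q + 2))))
        = ((p + q)! * (d p * d q)) * ((p + q + 1) * ((q + 1)! ^ 4 * (q + 2))) := by ring
      _ ∣ d (p + q) * ((p + q + 1)! ^ 4 * (p + q + 2)) :=
        mul_dvd_mul ih (succ_mul_factorial_pow_dvd hp)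

theorem factorial_mul_prod_d_dvd (l : List ℕ) (hl : ∀ m ∈ l, 0 < m) :
    Nat.factorial l.length * (l.map d).prod ∣ d l.sum := by
  induction l with
  | nil => simp [d]
  | cons a t ih =>
    simp only [List.forall_mem_cons] at hl
    obtain ⟨ha, ht⟩ := hl
    simp only [List.length_cons, List.map_cons, List.prod_cons, List.sum_cons]
    rcases eq_or_ne t [] with rfl | hne
    · simp
    have hlen : t.length ≤ t.sum := List.length_le_sum_of_one_le t ht
    have hsum : 1 ≤ t.sum := (List.length_pos_iff.mpr hne).trans_le hlen
    calc (t.length + 1)! * (d a * (t.map d).prod)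
        ∣ (a + t.sum)! * (d a * d t.sum) :=
          mul_dvd_mul (factorial_dvd_factorial (by omega))
            (mul_dvd_mul_left _ (dvd_of_mul_left_dvd (ih ht)))
      _ ∣ d (a + t.sum) := factorial_add_mul_d_mul_d_dvd ha hsum
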